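/- arXiv:2604.05567 — 3 statements merged into one kernel-verified Lean document; each statement's English description precedes it below -/
import Mathlib

section
/- Let n ≥ 1 and let H be an operator mapping signals u : [0,∞) → ℝⁿ to signals, which is causal (for every T ≥ 0 and every signal u in L2e, the truncation to [0,T] of H(u) equals a.e. the truncation to [0,T] of H applied to the truncation of u), maps L2 into L2, and maps L2e into L2e. Let a, b, c ∈ ℝ and suppose there exists ε > 0 with a ≤ −ε and c ≥ ε (the multiplier [[a,b],[b,c]] is positive-negative). Then H satisfies the soft IQC, i.e. ∫₀^∞ ( a‖(Hu)(t)‖² + 2b⟨(Hu)(t), u(t)⟩ + c‖u(t)‖² ) dt ≥ 0 for every u ∈ L2 with integrable integrand, if and only if H satisfies the hard IQC, i.e. ∫₀^T ( a‖(Hu)(t)‖² + 2b⟨(Hu)(t), u(t)⟩ + c‖u(t)‖² ) dt ≥ 0 for every T > 0 and every u ∈ L2e. -/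
open MeasureTheory

noncomputable section

/-- A signal is a function `ℝ → ℝⁿ`; only its values on `[0,∞)` matter. -/
abbrev Signal (n : ℕ) := ℝ → EuclideanSpace ℝ (Fin n)

/-- Truncation `P_T u`: pointwise product of `u` with the indicator of `[0,T]`. -/
def trunc {n : ℕ} (T : ℝ) (u : Signal n) : Signal n :=
  (Set.Icc (0 : ℝ) T).indicator u

/-- `u ∈ L2`: a.e.-strongly measurable on `[0,∞)` with `∫₀^∞ ‖u(t)‖² dt < ∞`. -/
def InL2 {n : ℕ} (u : Signal n) : Prop :=
  AEStronglyMeasurable u (volume.restrict (Set.Ici (0 : ℝ))) ∧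
    Integrable (fun t => ‖u t‖ ^ 2) (volume.restrict (Set.Ici (0 : ℝ)))

/-- `u ∈ L2e`: every truncation of `u` lies in `L2`. -/
def InL2e {n : ℕ} (u : Signal n) : Prop :=
  ∀ T ≥ (0 : ℝ), InL2 (trunc T u)

/-- `H` is causal: `P_T (H u) = P_T (H (P_T u))` a.e., for all `T ≥ 0` and `u ∈ L2e`. -/
def Causal {n : ℕ} (H : Signal n → Signal n) : Prop :=
  ∀ T ≥ (0 : ℝ), ∀ u : Signal n, InL2e u →
    trunc T (H u) =ᵐ[volume] trunc T (H (trunc T u))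

/-- The IQC integrand `a‖y(t)‖² + 2b⟨y(t),u(t)⟩ + c‖u(t)‖²` for the static multiplier
`Π = [[a,b],[b,c]]`. -/
def iqcIntegrand {n : ℕ} (a b c : ℝ) (u y : Signal n) (t : ℝ) : ℝ :=
  a * ‖y t‖ ^ 2 + 2 * b * (inner ℝ (y t) (u t) : ℝ) + c * ‖u t‖ ^ 2

/-!
Soft ⇒ hard: given `u ∈ L2e` and `T > 0`, apply the soft IQC to `v = P_T u ∈ L2`. Past `T`
the input `v` vanishes, so the integrand reduces to `a‖(Hv)(t)‖² ≤ 0`; hence the integral over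
`[0,T]` dominates the nonnegative integral over `[0,∞)`, and by causality it equals the hard
IQC integral of `u`. Hard ⇒ soft: the integrals over `[0,T]` converge to the integral over
`[0,∞)` as `T → ∞`.
-/

open Set Filter Topology

section Signals

variable {n : ℕ}

theorem trunc_apply_of_mem {T t : ℝ} (u : Signal n) (ht : t ∈ Icc 0 T) : trunc T u t = u t :=
  indicator_of_mem ht u

theorem trunc_apply_of_lt {T t : ℝ} (u : Signal n) (ht : T < t) : trunc T u t = 0 :=
  indicator_of_notMem (fun h => (h.2.trans_lt ht).false) u

theorem InL2.trunc {u : Signal n} (hu : InL2 u) (T : ℝ) : InL2 (_root_.trunc T u) := by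
  refine ⟨hu.1.indicator measurableSet_Icc, ?_⟩
  have hsq : (fun t => ‖_root_.trunc T u t‖ ^ 2) = (Icc 0 T).indicator (fun t => ‖u t‖ ^ 2) := by
    funext t
    by_cases ht : t ∈ Icc 0 T <;> simp [_root_.trunc, ht]
  rw [hsq]
  exact hu.2.indicator measurableSet_Icc

theorem InL2.inL2e {u : Signal n} (hu : InL2 u) : InL2e u :=
  fun T _ => hu.trunc T

theorem integrable_iqcIntegrand (a b c : ℝ) {u y : Signal n} (hu : InL2 u) (hy : InL2 y) :
    Integrable (iqcIntegrand a b c u y) (volume.restrict (Ici 0)) := by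
  have hinner : Integrable (fun t => (inner ℝ (y t) (u t) : ℝ)) (volume.restrict (Ici 0)) := by
    refine ((hy.2.div_const 2).add (hu.2.div_const 2)).mono' (hy.1.inner hu.1) ?_
    filter_upwards with t
    rw [Pi.add_apply, Real.norm_eq_abs]
    nlinarith [abs_real_inner_le_norm (y t) (u t), sq_nonneg (‖y t‖ - ‖u t‖)]
  exact ((hy.2.const_mul a).add (hinner.const_mul (2 * b))).add (hu.2.const_mul c)

theorem iqcIntegrand_nonpos_of_eq_zero {a : ℝ} (ha : a ≤ 0) (b c : ℝ) {u : Signal n}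
    (y : Signal n) {t : ℝ} (hut : u t = 0) : iqcIntegrand a b c u y t ≤ 0 := by
  simp only [iqcIntegrand, hut, inner_zero_right, norm_zero]
  nlinarith [sq_nonneg ‖y t‖]

theorem Causal.setIntegral_iqcIntegrand_trunc {H : Signal n → Signal n} (hH : Causal H)
    (a b c : ℝ) {u : Signal n} (hu : InL2e u) {T : ℝ} (hT : 0 ≤ T) :
    ∫ t in Icc 0 T, iqcIntegrand a b c (trunc T u) (H (trunc T u)) t =
      ∫ t in Icc 0 T, iqcIntegrand a b c u (H u) t := by
  refine setIntegral_congr_ae measurableSet_Icc ?_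
  filter_upwards [hH T hT u hu] with t hHt ht
  rw [trunc_apply_of_mem _ ht, trunc_apply_of_mem _ ht] at hHt
  simp only [iqcIntegrand, hHt, trunc_apply_of_mem u ht]

end Signals

theorem setIntegral_Ici_le_setIntegral_Icc {f : ℝ → ℝ} {a T : ℝ} (haT : a ≤ T)
    (hf : IntegrableOn f (Ici a)) (hf_nonpos : ∀ t > T, f t ≤ 0) :
    ∫ t in Ici a, f t ≤ ∫ t in Icc a T, f t := by
  have hdisj : Disjoint (Icc a T) (Ioi T) :=
    disjoint_left.2 fun _ hx hx' => (hx.2.trans_lt hx').false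
  rw [← Icc_union_Ioi_eq_Ici haT, setIntegral_union hdisj measurableSet_Ioi
    (hf.mono_set Icc_subset_Ici_self) (hf.mono_set (Ioi_subset_Ici haT))]
  have htail : ∫ t in Ioi T, f t ≤ 0 := setIntegral_nonpos measurableSet_Ioi hf_nonpos
  linarith

theorem setIntegral_Ici_nonneg_of_forall_Icc {f : ℝ → ℝ} {a : ℝ} (hf : IntegrableOn f (Ici a))
    (h : ∀ T > a, 0 ≤ ∫ t in Icc a T, f t) : 0 ≤ ∫ t in Ici a, f t := by
  rw [integral_Ici_eq_integral_Ioi]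
  refine ge_of_tendsto (intervalIntegral_tendsto_integral_Ioi a
    (hf.mono_set Ioi_subset_Ici_self) tendsto_id) ?_
  filter_upwards [eventually_gt_atTop a] with T hT
  rw [id, intervalIntegral.integral_of_le hT.le, ← integral_Icc_eq_integral_Ioc]
  exact h T hT

theorem stmt0_general {n : ℕ} (H : Signal n → Signal n)
    (hcausal : Causal H)
    (hL2 : ∀ u, InL2 u → InL2 (H u))
    (a b c : ℝ) (hpn : ∃ ε > (0 : ℝ), a ≤ -ε ∧ ε ≤ c) :
    (∀ u : Signal n, InL2 u →
        Integrable (iqcIntegrand a b c u (H u)) (volume.restrict (Set.Ici (0 : ℝ))) →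
        0 ≤ ∫ t in Set.Ici (0 : ℝ), iqcIntegrand a b c u (H u) t) ↔
    (∀ u : Signal n, InL2e u → ∀ T > (0 : ℝ),
        0 ≤ ∫ t in Set.Icc (0 : ℝ) T, iqcIntegrand a b c u (H u) t) := by
  obtain ⟨ε, hε, ha, -⟩ := hpn
  refine ⟨fun hsoft u hu T hT => ?_, fun hhard u hu hint => ?_⟩
  · have hv : InL2 (trunc T u) := hu T hT.le
    have hint := integrable_iqcIntegrand a b c hv (hL2 _ hv)
    rw [← hcausal.setIntegral_iqcIntegrand_trunc a b c hu hT.le]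
    calc (0 : ℝ) ≤ ∫ t in Ici 0, iqcIntegrand a b c (trunc T u) (H (trunc T u)) t :=
          hsoft _ hv hint
      _ ≤ _ := setIntegral_Ici_le_setIntegral_Icc hT.le hint fun t ht =>
          iqcIntegrand_nonpos_of_eq_zero (by linarith) b c _ (trunc_apply_of_lt u ht)
  · exact setIntegral_Ici_nonneg_of_forall_Icc hint (hhard u hu.inL2e)

/-- Soft–hard IQC equivalence for a causal, `L2`-stable operator and a
positive-negative static multiplier `[[a,b],[b,c]]` (i.e. `a ≤ -ε`, `c ≥ ε` for some
`ε > 0`): the soft IQC holds for all `u ∈ L2` (with integrable integrand) iff the hard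
IQC holds for all horizons `T > 0` and all `u ∈ L2e`. -/
theorem stmt0 {n : ℕ} (hn : 1 ≤ n) (H : Signal n → Signal n)
    (hcausal : Causal H)
    (hL2 : ∀ u, InL2 u → InL2 (H u))
    (hL2e : ∀ u, InL2e u → InL2e (H u))
    (a b c : ℝ) (hpn : ∃ ε > (0 : ℝ), a ≤ -ε ∧ ε ≤ c) :
    (∀ u : Signal n, InL2 u →
        Integrable (iqcIntegrand a b c u (H u)) (volume.restrict (Set.Ici (0 : ℝ))) →
        0 ≤ ∫ t in Set.Ici (0 : ℝ), iqcIntegrand a b c u (H u) t) ↔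
    (∀ u : Signal n, InL2e u → ∀ T > (0 : ℝ),
        0 ≤ ∫ t in Set.Icc (0 : ℝ) T, iqcIntegrand a b c u (H u) t) :=
  stmt0_general H hcausal hL2 a b c hpn

end
end

section
/- Let Θ₁₁, Θ₂₂, Θ₁₃, Θ₃₃ ∈ ℝ, define M := [[Θ₃₃ − Θ₂₂, Θ₁₃],[Θ₁₃, Θ₁₁ − Θ₂₂]], b := (−Θ₃₃, −Θ₁₃) ∈ ℝ², c := Θ₂₂ + Θ₃₃, q(w) := wᵀMw + 2bᵀw + c, and g(w) := Mw + b. Then for every w ∈ ℝ² with q(w) = 0, the curvature numerator N(w) := 8·g(w)ᵀ·adj(M)·g(w) equals the constant 8·Θ₂₂²·(Θ₁₁ − Θ₂₂), independently of w, Θ₁₃, and Θ₃₃. -/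
open Matrix

/-- On the zero set of `q(w) = wᵀMw + 2bᵀw + c` (with `M, b, c` built from the conic data
`Θ₁₁, Θ₂₂, Θ₁₃, Θ₃₃`), the curvature numerator `N(w) = 8·g(w)ᵀ·adj(M)·g(w)`, where
`g(w) = Mw + b`, equals the constant `8·Θ₂₂²·(Θ₁₁ - Θ₂₂)`. -/
theorem stmt9 (Θ11 Θ22 Θ13 Θ33 : ℝ)
    (M : Matrix (Fin 2) (Fin 2) ℝ) (hMdef : M = !![Θ33 - Θ22, Θ13; Θ13, Θ11 - Θ22])
    (b : Fin 2 → ℝ) (hbdef : b = ![-Θ33, -Θ13])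
    (w : Fin 2 → ℝ)
    (hq : w ⬝ᵥ M.mulVec w + 2 * (b ⬝ᵥ w) + (Θ22 + Θ33) = 0) :
    8 * ((M.mulVec w + b) ⬝ᵥ M.adjugate.mulVec (M.mulVec w + b)) =
      8 * Θ22 ^ 2 * (Θ11 - Θ22) := by
  subst hMdef hbdef
  have h2 : (!![Θ33 - Θ22, Θ13; Θ13, Θ11 - Θ22] : Matrix (Fin 2) (Fin 2) ℝ).adjugate
      = !![Θ11 - Θ22, -Θ13; -Θ13, Θ33 - Θ22] := by
    rw [Matrix.adjugate_fin_two]; simp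
  rw [h2]
  simp [Matrix.mulVec, dotProduct, Fin.sum_univ_two, Matrix.vecHead, Matrix.vecTail] at hq ⊢
  linear_combination (8 * ((Θ33 - Θ22) * (Θ11 - Θ22) - Θ13 ^ 2)) * hq
end

section
/- Let n ≥ 1 and let Π be a real symmetric 2n×2n matrix, written in blocks as Π = [[Π₁₁, Π₁₂],[Π₁₂ᵀ, Π₂₂]] with each block n×n. Suppose there exists ε > 0 such that Π₂₂ − εI is positive semidefinite and Π₁₁ + εI is negative semidefinite (Π is positive-negative). Then Π admits a J-spectral factorization: there exists an invertible real 2n×2n matrix Ψ such that Π = Ψᵀ J Ψ, where J := [[Iₙ, 0],[0, −Iₙ]]. -/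
/-!
Since `-Π₁₁` and `Π₂₂` are positive definite, block Gaussian elimination writes `Π` as
`Lᴴ diag(Π₁₁, S) L` with `L` unipotent and Schur complement `S = Π₂₂ - Π₁₂ᴴ Π₁₁⁻¹ Π₁₂`, which is
positive definite because `-Π₁₁⁻¹` is. Factoring `-Π₁₁ = XᴴX` and `S = YᴴY` with `X`, `Y`
invertible, the antidiagonal block matrix `M = [[0, Y], [X, 0]]` satisfies
`Mᴴ J M = diag(Π₁₁, S)`, so `Ψ = M L` works.
-/

open Matrix
open scoped ComplexOrder

namespace Matrix

variable {𝕜 : Type*} [RCLike 𝕜]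

theorem PosDef.of_posSemidef_sub_smul_one {n : Type*} [DecidableEq n] {A : Matrix n n 𝕜}
    {ε : ℝ} (hε : 0 < ε) (hA : (A - ε • (1 : Matrix n n 𝕜)).PosSemidef) : A.PosDef := by
  simpa using PosDef.posSemidef_add hA (PosDef.one.smul hε)

open scoped MatrixOrder in
theorem PosDef.exists_isUnit_eq_conjTranspose_mul_self {n : Type*} [Fintype n] [DecidableEq n]
    {N : Matrix n n 𝕜} (hN : N.PosDef) : ∃ A : Matrix n n 𝕜, IsUnit A ∧ N = Aᴴ * A := by
  obtain ⟨A, rfl⟩ := CStarAlgebra.nonneg_iff_eq_star_mul_self.mp hN.posSemidef.nonneg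
  refine ⟨A, ?_, rfl⟩
  have hdet := (isUnit_iff_isUnit_det _).mp hN.isUnit
  rw [det_mul, IsUnit.mul_iff] at hdet
  exact (isUnit_iff_isUnit_det A).mpr hdet.2

theorem PosDef.sub_conjTranspose_mul_inv_mul {m n : Type*} [Fintype m] [DecidableEq m]
    [Fintype n] {A : Matrix m m 𝕜} {D : Matrix n n 𝕜} (hA : (-A).PosDef) (hD : D.PosDef)
    (B : Matrix m n 𝕜) : (D - Bᴴ * A⁻¹ * B).PosDef := by
  have hdet : IsUnit A.det := (isUnit_iff_isUnit_det A).mp ((IsUnit.neg_iff A).mp hA.isUnit)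
  have hneg : (-A)⁻¹ = -A⁻¹ := inv_eq_left_inv (by rw [neg_mul_neg, nonsing_inv_mul _ hdet])
  have hB : (Bᴴ * (-A)⁻¹ * B).PosSemidef := hA.inv.posSemidef.conjTranspose_mul_mul_same B
  rw [hneg] at hB
  simpa [sub_eq_add_neg] using hD.add_posSemidef hB

theorem fromBlocks_eq_conjTranspose_mul_fromBlocks_mul {m n : Type*} [Fintype m]
    [DecidableEq m] [Fintype n] [DecidableEq n] {A : Matrix m m 𝕜} (hA : A.IsHermitian)
    (hdet : IsUnit A.det) (B : Matrix m n 𝕜) (D : Matrix n n 𝕜) :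
    fromBlocks A B Bᴴ D = (fromBlocks 1 (A⁻¹ * B) 0 1)ᴴ *
      fromBlocks A 0 0 (D - Bᴴ * A⁻¹ * B) * fromBlocks 1 (A⁻¹ * B) 0 1 := by
  let := invertibleOfIsUnitDet A hdet
  rw [fromBlocks_eq_of_invertible₁₁, invOf_eq_nonsing_inv, fromBlocks_conjTranspose,
    conjTranspose_mul, conjTranspose_nonsing_inv, hA.eq]
  simp

theorem conjTranspose_fromBlocks_zero_zero_mul_fromBlocks_one_neg_one_mul
    {k l m n : Type*} [Fintype k] [DecidableEq k] [Fintype l] [DecidableEq l]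
    (A : Matrix k m 𝕜) (B : Matrix l n 𝕜) :
    (fromBlocks 0 B A 0)ᴴ * fromBlocks (1 : Matrix l l 𝕜) 0 0 (-1 : Matrix k k 𝕜) *
      fromBlocks 0 B A 0 = fromBlocks (-(Aᴴ * A)) 0 0 (Bᴴ * B) := by
  simp [fromBlocks_conjTranspose, fromBlocks_multiply]

variable {n : Type*} [Fintype n] [DecidableEq n]

theorem isUnit_fromBlocks_zero_zero {A B : Matrix n n 𝕜} (hA : IsUnit A) (hB : IsUnit B) :
    IsUnit (fromBlocks 0 B A 0) := by
  have hA' := (isUnit_iff_isUnit_det A).mp hA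
  have hB' := (isUnit_iff_isUnit_det B).mp hB
  refine (isUnit_iff_isUnit_det _).mpr
    (isUnit_det_of_right_inverse (B := fromBlocks 0 A⁻¹ B⁻¹ 0) ?_)
  simp [fromBlocks_multiply, mul_nonsing_inv _ hA', mul_nonsing_inv _ hB', ← fromBlocks_one]

theorem exists_isUnit_fromBlocks_eq_conjTranspose_mul_fromBlocks_one_neg_one_mul
    {A D : Matrix n n 𝕜} (hA : (-A).PosDef) (hD : D.PosDef) (B : Matrix n n 𝕜) :
    ∃ Ψ : Matrix (n ⊕ n) (n ⊕ n) 𝕜, IsUnit Ψ ∧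
      fromBlocks A B Bᴴ D = Ψᴴ * fromBlocks 1 0 0 (-1) * Ψ := by
  have hdet : IsUnit A.det := (isUnit_iff_isUnit_det A).mp ((IsUnit.neg_iff A).mp hA.isUnit)
  obtain ⟨X, hX, hXA⟩ := hA.exists_isUnit_eq_conjTranspose_mul_self
  obtain ⟨Y, hY, hYS⟩ :=
    (hA.sub_conjTranspose_mul_inv_mul hD B).exists_isUnit_eq_conjTranspose_mul_self
  set L : Matrix (n ⊕ n) (n ⊕ n) 𝕜 := fromBlocks 1 (A⁻¹ * B) 0 1
  set M : Matrix (n ⊕ n) (n ⊕ n) 𝕜 := fromBlocks 0 Y X 0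
  have hL : IsUnit L := isUnit_fromBlocks_zero₂₁.mpr ⟨isUnit_one, isUnit_one⟩
  have hLDL : fromBlocks A B Bᴴ D = Lᴴ * fromBlocks A 0 0 (D - Bᴴ * A⁻¹ * B) * L :=
    fromBlocks_eq_conjTranspose_mul_fromBlocks_mul (by simpa using hA.isHermitian.neg) hdet B D
  have hdiag : fromBlocks A 0 0 (D - Bᴴ * A⁻¹ * B) = Mᴴ * fromBlocks 1 0 0 (-1) * M := by
    rw [conjTranspose_fromBlocks_zero_zero_mul_fromBlocks_one_neg_one_mul, ← hXA, ← hYS,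
      neg_neg]
  refine ⟨M * L, (isUnit_fromBlocks_zero_zero hX hY).mul hL, ?_⟩
  rw [hLDL, hdiag, conjTranspose_mul]
  simp only [Matrix.mul_assoc]

end Matrix

theorem stmt17_general {n : ℕ}
    (P11 P12 P22 : Matrix (Fin n) (Fin n) ℝ)
    (hpn : ∃ ε > (0 : ℝ), (P22 - ε • (1 : Matrix (Fin n) (Fin n) ℝ)).PosSemidef ∧
      (-(P11 + ε • (1 : Matrix (Fin n) (Fin n) ℝ))).PosSemidef) :
    ∃ Ψ : Matrix (Fin n ⊕ Fin n) (Fin n ⊕ Fin n) ℝ, IsUnit Ψ ∧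
      Matrix.fromBlocks P11 P12 P12ᵀ P22 =
        Ψᵀ * Matrix.fromBlocks (1 : Matrix (Fin n) (Fin n) ℝ) 0 0
          (-(1 : Matrix (Fin n) (Fin n) ℝ)) * Ψ := by
  obtain ⟨ε, hε, hP22, hP11⟩ := hpn
  have hneg : (-P11).PosDef := PosDef.of_posSemidef_sub_smul_one hε (by rwa [← neg_add'])
  have hpos : P22.PosDef := PosDef.of_posSemidef_sub_smul_one hε hP22
  simpa [conjTranspose_eq_transpose_of_trivial] using
    exists_isUnit_fromBlocks_eq_conjTranspose_mul_fromBlocks_one_neg_one_mul hneg hpos P12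

/-- A positive-negative real symmetric block matrix `Π = [[Π₁₁,Π₁₂],[Π₁₂ᵀ,Π₂₂]]`
(there is `ε > 0` with `Π₂₂ - εI ⪰ 0` and `Π₁₁ + εI ⪯ 0`) admits a J-spectral
factorization `Π = Ψᵀ J Ψ` with `Ψ` invertible and `J = [[Iₙ,0],[0,-Iₙ]]`. -/
theorem stmt17 {n : ℕ} (hn : 1 ≤ n)
    (P11 P12 P22 : Matrix (Fin n) (Fin n) ℝ)
    (h11 : P11.IsSymm) (h22 : P22.IsSymm)
    (hpn : ∃ ε > (0 : ℝ), (P22 - ε • (1 : Matrix (Fin n) (Fin n) ℝ)).PosSemidef ∧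
      (-(P11 + ε • (1 : Matrix (Fin n) (Fin n) ℝ))).PosSemidef) :
    ∃ Ψ : Matrix (Fin n ⊕ Fin n) (Fin n ⊕ Fin n) ℝ, IsUnit Ψ ∧
      Matrix.fromBlocks P11 P12 P12ᵀ P22 =
        Ψᵀ * Matrix.fromBlocks (1 : Matrix (Fin n) (Fin n) ℝ) 0 0
          (-(1 : Matrix (Fin n) (Fin n) ℝ)) * Ψ :=
  stmt17_general P11 P12 P22 hpn
end
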